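/- Let f : ℝ → ℝ satisfy f(x) → 0 as x → +∞, and let λ > 1 be a real number such that x^λ·(f(x) − f(x+1)) → l as x → +∞ for some real number l. Then x^{λ−1}·f(x) → l/(λ−1) as x → +∞. -/

import Mathlib

/-!
Put `c = l / (λ - 1)`. Since `x ^ λ * (x ^ (1 - λ) - (x + 1) ^ (1 - λ)) → λ - 1`, the function
`g x = f x - c * x ^ (1 - λ)` still tends to `0` and satisfies `x ^ λ * (g x - g (x + 1)) → 0`,
so it suffices to treat `l = 0`. Then, for every `ε > 0`, eventually
`|g y - g (y + 1)| ≤ ε * (y ^ (1 - λ) - (y + 1) ^ (1 - λ))`; telescoping along `x, x + 1, x + 2, …`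
and using `g → 0` gives `|g x| ≤ ε * x ^ (1 - λ)`.
-/

open Filter Topology

theorem norm_le_of_forall_norm_sub_add_one_le {E : Type*} [NormedAddCommGroup E]
    {g : ℝ → E} {φ : ℝ → ℝ} (hg : Tendsto g atTop (𝓝 0)) (hφ : Tendsto φ atTop (𝓝 0))
    {X : ℝ} (hstep : ∀ y ≥ X, ‖g y - g (y + 1)‖ ≤ φ y - φ (y + 1)) {x : ℝ} (hx : X ≤ x) :
    ‖g x‖ ≤ φ x := by
  have htel : ∀ n : ℕ, ‖g x - g (x + n)‖ ≤ φ x - φ (x + n) := by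
    intro n
    induction n with
    | zero => simp
    | succ n ih =>
      have hn := hstep (x + n) (by linarith [n.cast_nonneg (α := ℝ)])
      push_cast
      rw [← add_assoc]
      calc ‖g x - g (x + n + 1)‖ ≤ ‖g x - g (x + n)‖ + ‖g (x + n) - g (x + n + 1)‖ :=
            norm_sub_le_norm_sub_add_norm_sub _ _ _
        _ ≤ φ x - φ (x + n + 1) := by linarith
  have hshift : Tendsto (fun n : ℕ => x + n) atTop atTop :=
    tendsto_atTop_add_const_left _ x tendsto_natCast_atTop_atTop
  simpa using le_of_tendsto_of_tendsto' (((hg.comp hshift).const_sub (g x)).norm)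
    ((hφ.comp hshift).const_sub (φ x)) htel

theorem rpow_sub_one_mul_rpow_one_sub {x : ℝ} (hx : 0 < x) (a : ℝ) :
    x ^ (a - 1) * x ^ (1 - a) = 1 := by
  rw [← Real.rpow_add hx, sub_add_sub_cancel', sub_self, Real.rpow_zero]

theorem tendsto_rpow_one_sub_atTop {lam : ℝ} (hlam : 1 < lam) :
    Tendsto (fun x : ℝ => x ^ (1 - lam)) atTop (𝓝 0) := by
  simpa using tendsto_rpow_neg_atTop (show 0 < lam - 1 by linarith)

theorem tendsto_rpow_mul_rpow_sub_rpow_add_one (lam : ℝ) :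
    Tendsto (fun x : ℝ => x ^ lam * (x ^ (1 - lam) - (x + 1) ^ (1 - lam))) atTop
      (𝓝 (lam - 1)) := by
  -- `x ^ λ * (x ^ (1 - λ) - (x + 1) ^ (1 - λ)) = -(t⁻¹ * ((1 + t) ^ (1 - λ) - 1))` with `t = x⁻¹`
  have hderiv : HasDerivAt (fun t : ℝ => (1 + t) ^ (1 - lam)) (1 - lam) 0 := by
    simpa using ((hasDerivAt_id (0 : ℝ)).const_add 1).rpow_const (p := 1 - lam) (by simp)
  have hslope := (hasDerivAt_iff_tendsto_slope_zero.1 hderiv).comp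
    (tendsto_nhdsWithin_mono_right (fun t (ht : 0 < t) => ht.ne') tendsto_inv_atTop_nhdsGT_zero)
  rw [show lam - 1 = -(1 - lam) by ring]
  refine hslope.neg.congr' ?_
  filter_upwards [eventually_gt_atTop 0] with x hx
  have hsplit : (x + 1) ^ (1 - lam) = x ^ (1 - lam) * (1 + x⁻¹) ^ (1 - lam) := by
    rw [← Real.mul_rpow hx.le (by positivity), mul_add, mul_inv_cancel₀ hx.ne', mul_one]
  have hx1 : x ^ lam * x ^ (1 - lam) = x := by
    rw [← Real.rpow_add hx, add_sub_cancel, Real.rpow_one]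
  simp only [Function.comp_apply, zero_add, add_zero, Real.one_rpow, inv_inv, smul_eq_mul, hsplit]
  linear_combination ((1 + x⁻¹) ^ (1 - lam) - 1) * hx1

theorem tendsto_rpow_sub_one_mul_of_tendsto_rpow_mul_sub_add_one {g : ℝ → ℝ} {lam : ℝ}
    (hlam : 1 < lam) (hg : Tendsto g atTop (𝓝 0))
    (hdiff : Tendsto (fun x : ℝ => x ^ lam * (g x - g (x + 1))) atTop (𝓝 0)) :
    Tendsto (fun x : ℝ => x ^ (lam - 1) * g x) atTop (𝓝 0) := by
  have hlam' : 0 < lam - 1 := by linarith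
  suffices hsmall : ∀ ε > 0, ∀ᶠ x in atTop, |x ^ (lam - 1) * g x| ≤ ε by
    refine Metric.tendsto_nhds.2 fun ε hε => (hsmall (ε / 2) (half_pos hε)).mono fun x hx => ?_
    rw [Real.dist_eq, sub_zero]
    linarith
  intro ε hε
  have hstep : ∀ᶠ y in atTop, |g y - g (y + 1)| ≤
      ε * y ^ (1 - lam) - ε * (y + 1) ^ (1 - lam) := by
    filter_upwards [eventually_gt_atTop 0,
      (tendsto_rpow_mul_rpow_sub_rpow_add_one lam).eventually_const_le (half_lt_self hlam'),
      Metric.tendsto_nhds.1 hdiff (ε * ((lam - 1) / 2)) (by positivity)] with y hy hψy hdy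
    rw [Real.dist_eq, sub_zero, abs_mul, abs_of_pos (Real.rpow_pos_of_pos hy lam)] at hdy
    rw [← mul_sub]
    refine le_of_mul_le_mul_left ?_ (Real.rpow_pos_of_pos hy lam)
    nlinarith
  obtain ⟨X, hX⟩ := eventually_atTop.1 hstep
  filter_upwards [eventually_ge_atTop X, eventually_gt_atTop 0] with x hxX hx
  have hbound : |g x| ≤ ε * x ^ (1 - lam) :=
    norm_le_of_forall_norm_sub_add_one_le hg
      (by simpa using (tendsto_rpow_one_sub_atTop hlam).const_mul ε) hX hxX
  rw [abs_mul, abs_of_pos (Real.rpow_pos_of_pos hx _)]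
  calc x ^ (lam - 1) * |g x| ≤ x ^ (lam - 1) * (ε * x ^ (1 - lam)) :=
        mul_le_mul_of_nonneg_left hbound (Real.rpow_nonneg hx.le _)
    _ = ε := by rw [mul_left_comm, rpow_sub_one_mul_rpow_one_sub hx, mul_one]

/-- The Mortici lemma: if `f → 0` at `+∞` and `x^λ (f x − f (x+1)) → l` with `λ > 1`,
then `x^(λ−1) f x → l/(λ−1)`. -/
theorem stmt14 (f : ℝ → ℝ) (hf : Tendsto f atTop (nhds 0))
    (lam l : ℝ) (hlam : 1 < lam)
    (h : Tendsto (fun x : ℝ => x ^ lam * (f x - f (x + 1))) atTop (nhds l)) :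
    Tendsto (fun x : ℝ => x ^ (lam - 1) * f x) atTop (nhds (l / (lam - 1))) := by
  set c := l / (lam - 1) with hc
  have hlc : l - c * (lam - 1) = 0 := by
    rw [hc, div_mul_cancel₀ _ (by linarith), sub_self]
  have hg : Tendsto (fun x => f x - c * x ^ (1 - lam)) atTop (𝓝 0) := by
    simpa using hf.sub ((tendsto_rpow_one_sub_atTop hlam).const_mul c)
  have hgdiff : Tendsto (fun x : ℝ => x ^ lam *
      ((f x - c * x ^ (1 - lam)) - (f (x + 1) - c * (x + 1) ^ (1 - lam)))) atTop (𝓝 0) := by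
    rw [← hlc]
    refine (h.sub ((tendsto_rpow_mul_rpow_sub_rpow_add_one lam).const_mul c)).congr fun x => ?_
    ring
  have hmain :=
    (tendsto_rpow_sub_one_mul_of_tendsto_rpow_mul_sub_add_one hlam hg hgdiff).add_const c
  rw [zero_add] at hmain
  refine hmain.congr' ?_
  filter_upwards [eventually_gt_atTop 0] with x hx
  linear_combination -c * rpow_sub_one_mul_rpow_one_sub hx lam
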